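/- arXiv:1004.4854 — 3 statements merged into one kernel-verified Lean document; each statement's English description precedes it below -/
import Mathlib

section
/- Let φA : Fin dA → ℂ and φB : Fin dB → ℂ be unit vectors, let ψ : Fin dA × Fin dB → ℂ be the product state ψ (a, b) = φA a * φB b, and let M : Fin nA → Matrix (Fin dA) (Fin dA) ℂ and N : Fin nB → Matrix (Fin dB) (Fin dB) ℂ satisfy ∑ i, (M i)ᴴ * (M i) = 1 and ∑ j, (N j)ᴴ * (N j) = 1. Define B : Matrix (Fin nA) (Fin nB) ℂ by B i j = Real.sqrt (re ⟨ψ, ((M i)ᴴ * (M i)) ⊗ ((N j)ᴴ * (N j)) ψ⟩). Then the entropy of entanglement of the measurement-space state vanishes: S(B * Bᴴ) = 0. In other words, a separable state has zero operationally useful entanglement. -/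
open Matrix Kronecker

/-- `expect T v` is `re ⟨v, T v⟩ = re (∑ i, conj (v i) * (T.mulVec v) i)`. -/
noncomputable def expect {ι : Type*} [Fintype ι] (T : Matrix ι ι ℂ) (v : ι → ℂ) : ℝ :=
  (∑ i, (starRingEnd ℂ) (v i) * (T.mulVec v) i).re

/-- `entEnt C = S(C * Cᴴ)`, the Shannon entropy of the eigenvalues of `C * Cᴴ`;
for a bipartite unit vector with coefficient matrix `C` this is the entropy of
entanglement of the state. -/
noncomputable def entEnt {k l : ℕ} (C : Matrix (Fin k) (Fin l) ℂ) : ℝ :=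
  ∑ i, Real.negMulLog ((Matrix.isHermitian_mul_conjTranspose_self C).eigenvalues i)

/-- Eigenvalues of an idempotent Hermitian matrix are `0` or `1`. -/
lemma aux_eig_idem {k : ℕ} (P : Matrix (Fin k) (Fin k) ℂ) (hP : P.IsHermitian)
    (hPP : P * P = P) (i : Fin k) : hP.eigenvalues i = 0 ∨ hP.eigenvalues i = 1 := by
  set v := ⇑(hP.eigenvectorBasis i) with hv
  have hev := hP.mulVec_eigenvectorBasis i
  have hvne : v ≠ 0 := by
    have := hP.eigenvectorBasis.orthonormal.ne_zero i
    intro h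
    apply this
    ext j
    exact congrFun h j
  obtain ⟨j, hj⟩ := Function.ne_iff.1 hvne
  set lam := hP.eigenvalues i
  have h2 : (P * P) *ᵥ v = (lam * lam) • v := by
    rw [← mulVec_mulVec, hev, mulVec_smul, hev, smul_smul]
  rw [hPP, hev] at h2
  have := congrFun h2 j
  simp only [Pi.smul_apply] at this
  have h3 : ((lam : ℂ) - (lam * lam : ℝ)) * v j = 0 := by
    push_cast
    rw [sub_mul]
    simp only [Complex.real_smul] at this
    push_cast at this
    rw [this]; ring
  rcases mul_eq_zero.1 h3 with h | h
  · have hl : (lam : ℝ) = lam * lam := by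
      have := sub_eq_zero.1 h
      exact_mod_cast this
    have h4 : lam * (lam - 1) = 0 := by nlinarith
    rcases mul_eq_zero.1 h4 with h | h
    · exact Or.inl h
    · exact Or.inr (by linarith)
  · exact absurd h hj

lemma aux_quad {d : ℕ} (A : Matrix (Fin d) (Fin d) ℂ) (v : Fin d → ℂ) :
    ∑ a, (starRingEnd ℂ) (v a) * ((Aᴴ * A) *ᵥ v) a = ((∑ a, ‖(A *ᵥ v) a‖ ^ 2 : ℝ) : ℂ) := by
  have h : ∑ a, (starRingEnd ℂ) (v a) * ((Aᴴ * A) *ᵥ v) a = star v ⬝ᵥ ((Aᴴ * A) *ᵥ v) := by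
    simp [dotProduct]
  rw [h, ← mulVec_mulVec, dotProduct_mulVec, ← star_mulVec]
  simp [dotProduct]
  refine Finset.sum_congr rfl fun a _ => ?_
  rw [mul_comm, Complex.mul_conj']

lemma aux_factor {dA dB : ℕ} (X : Matrix (Fin dA) (Fin dA) ℂ) (Y : Matrix (Fin dB) (Fin dB) ℂ)
    (φA : Fin dA → ℂ) (φB : Fin dB → ℂ) (ψ : Fin dA × Fin dB → ℂ)
    (hψ : ∀ a b, ψ (a, b) = φA a * φB b) :
    ∑ p, (starRingEnd ℂ) (ψ p) * ((X ⊗ₖ Y) *ᵥ ψ) p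
      = (∑ a, (starRingEnd ℂ) (φA a) * (X *ᵥ φA) a)
        * (∑ b, (starRingEnd ℂ) (φB b) * (Y *ᵥ φB) b) := by
  have hψ' : ψ = fun p => φA p.1 * φB p.2 := by ext ⟨a, b⟩; exact hψ a b
  subst hψ'
  have key : ∀ a b, ((X ⊗ₖ Y) *ᵥ fun p : Fin dA × Fin dB => φA p.1 * φB p.2) (a, b)
      = (X *ᵥ φA) a * (Y *ᵥ φB) b := by
    intro a b
    simp only [mulVec, dotProduct, kroneckerMap_apply, Fintype.sum_prod_type]
    rw [Finset.sum_mul_sum]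
    refine Finset.sum_congr rfl fun a' _ => Finset.sum_congr rfl fun b' _ => by ring
  rw [Finset.sum_mul_sum, Fintype.sum_prod_type]
  refine Finset.sum_congr rfl fun a _ => Finset.sum_congr rfl fun b _ => ?_
  rw [key a b]
  simp only [_root_.map_mul]
  ring

theorem stmt_5 {dA dB nA nB : ℕ}
    (φA : Fin dA → ℂ) (hφA : ∑ a, ‖φA a‖ ^ 2 = 1)
    (φB : Fin dB → ℂ) (hφB : ∑ b, ‖φB b‖ ^ 2 = 1)
    (ψ : Fin dA × Fin dB → ℂ) (hψ : ∀ a b, ψ (a, b) = φA a * φB b)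
    (M : Fin nA → Matrix (Fin dA) (Fin dA) ℂ)
    (hM : ∑ i, (M i)ᴴ * M i = 1)
    (N : Fin nB → Matrix (Fin dB) (Fin dB) ℂ)
    (hN : ∑ j, (N j)ᴴ * N j = 1)
    (B : Matrix (Fin nA) (Fin nB) ℂ)
    (hB : ∀ i j, B i j =
      (Real.sqrt (expect (((M i)ᴴ * M i) ⊗ₖ ((N j)ᴴ * N j)) ψ) : ℂ)) :
    entEnt B = 0 := by
  classical
  set sA : Fin nA → ℝ := fun i => ∑ a, ‖((M i) *ᵥ φA) a‖ ^ 2 with hsAdef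
  set sB : Fin nB → ℝ := fun j => ∑ b, ‖((N j) *ᵥ φB) b‖ ^ 2 with hsBdef
  have hsAnn : ∀ i, 0 ≤ sA i := fun i =>
    Finset.sum_nonneg fun a _ => by positivity
  have hsBnn : ∀ j, 0 ≤ sB j := fun j =>
    Finset.sum_nonneg fun b _ => by positivity
  set p : Fin nA → ℝ := fun i => Real.sqrt (sA i) with hpdef
  set q : Fin nB → ℝ := fun j => Real.sqrt (sB j) with hqdef
  -- entry formula
  have hBij : ∀ i j, B i j = ((p i * q j : ℝ) : ℂ) := by
    intro i j
    rw [hB]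
    have : expect (((M i)ᴴ * M i) ⊗ₖ ((N j)ᴴ * N j)) ψ = sA i * sB j := by
      unfold expect
      rw [aux_factor _ _ _ _ _ hψ, aux_quad, aux_quad, ← Complex.ofReal_mul,
        Complex.ofReal_re]
    rw [this, Real.sqrt_mul (hsAnn i)]
  -- trace conditions
  have hsumA : ∑ i, sA i = 1 := by
    have h1 : ((∑ i, sA i : ℝ) : ℂ) = 1 := by
      push_cast
      rw [show (∑ i, (sA i : ℂ)) = ∑ i, ∑ a, (starRingEnd ℂ) (φA a) * (((M i)ᴴ * M i) *ᵥ φA) a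
        from Finset.sum_congr rfl fun i _ => (aux_quad (M i) φA).symm]
      rw [Finset.sum_comm]
      have : ∀ a, ∑ i, (starRingEnd ℂ) (φA a) * (((M i)ᴴ * M i) *ᵥ φA) a
          = (starRingEnd ℂ) (φA a) * φA a := by
        intro a
        rw [← Finset.mul_sum]
        congr 1
        have : ∑ i, (((M i)ᴴ * M i) *ᵥ φA) a = ((∑ i, (M i)ᴴ * M i) *ᵥ φA) a := by
          simp only [mulVec, dotProduct, Matrix.sum_apply, Finset.sum_mul]
          rw [Finset.sum_comm]
        rw [this, hM, one_mulVec]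
      rw [Finset.sum_congr rfl fun a _ => this a]
      have : ∀ a, (starRingEnd ℂ) (φA a) * φA a = ((‖φA a‖ ^ 2 : ℝ) : ℂ) := by
        intro a
        rw [mul_comm, Complex.mul_conj']
        simp
      rw [Finset.sum_congr rfl fun a _ => this a, ← Complex.ofReal_sum, hφA]
      norm_num
    exact_mod_cast h1
  have hsumB : ∑ j, sB j = 1 := by
    have h1 : ((∑ j, sB j : ℝ) : ℂ) = 1 := by
      push_cast
      rw [show (∑ j, (sB j : ℂ)) = ∑ j, ∑ b, (starRingEnd ℂ) (φB b) * (((N j)ᴴ * N j) *ᵥ φB) b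
        from Finset.sum_congr rfl fun j _ => (aux_quad (N j) φB).symm]
      rw [Finset.sum_comm]
      have : ∀ b, ∑ j, (starRingEnd ℂ) (φB b) * (((N j)ᴴ * N j) *ᵥ φB) b
          = (starRingEnd ℂ) (φB b) * φB b := by
        intro b
        rw [← Finset.mul_sum]
        congr 1
        have : ∑ j, (((N j)ᴴ * N j) *ᵥ φB) b = ((∑ j, (N j)ᴴ * N j) *ᵥ φB) b := by
          simp only [mulVec, dotProduct, Matrix.sum_apply, Finset.sum_mul]
          rw [Finset.sum_comm]
        rw [this, hN, one_mulVec]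
      rw [Finset.sum_congr rfl fun b _ => this b]
      have : ∀ b, (starRingEnd ℂ) (φB b) * φB b = ((‖φB b‖ ^ 2 : ℝ) : ℂ) := by
        intro b
        rw [mul_comm, Complex.mul_conj']
        simp
      rw [Finset.sum_congr rfl fun b _ => this b, ← Complex.ofReal_sum, hφB]
      norm_num
    exact_mod_cast h1
  have hp2 : ∑ i, p i ^ 2 = 1 := by
    rw [Finset.sum_congr rfl fun i _ => Real.sq_sqrt (hsAnn i), hsumA]
  have hq2 : ∑ j, q j ^ 2 = 1 := by
    rw [Finset.sum_congr rfl fun j _ => Real.sq_sqrt (hsBnn j), hsumB]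
  -- B * Bᴴ entries
  have hPent : ∀ i i', (B * Bᴴ) i i' = ((p i * p i' : ℝ) : ℂ) := by
    intro i i'
    rw [Matrix.mul_apply]
    have hterm : ∀ j, B i j * Bᴴ j i' = ((p i * p i' * q j ^ 2 : ℝ) : ℂ) := by
      intro j
      rw [conjTranspose_apply, hBij, hBij]
      rw [Complex.star_def, Complex.conj_ofReal, ← Complex.ofReal_mul]
      congr 1
      ring
    rw [Finset.sum_congr rfl fun j _ => hterm j, ← Complex.ofReal_sum]
    congr 1
    rw [← Finset.mul_sum, hq2, mul_one]
  -- idempotence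
  have hProj : (B * Bᴴ) * (B * Bᴴ) = B * Bᴴ := by
    ext i i''
    rw [Matrix.mul_apply, hPent]
    have hterm : ∀ i', (B * Bᴴ) i i' * (B * Bᴴ) i' i''
        = ((p i * p i'' * p i' ^ 2 : ℝ) : ℂ) := by
      intro i'
      rw [hPent, hPent, ← Complex.ofReal_mul]
      congr 1
      ring
    rw [Finset.sum_congr rfl fun i' _ => hterm i', ← Complex.ofReal_sum]
    congr 1
    rw [← Finset.mul_sum, hp2, mul_one]
  -- conclude
  unfold entEnt
  refine Finset.sum_eq_zero fun i _ => ?_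
  rcases aux_eig_idem (B * Bᴴ) (Matrix.isHermitian_mul_conjTranspose_self B) hProj i
    with h | h
  · rw [h]; exact Real.negMulLog_zero
  · rw [h]; exact Real.negMulLog_one
end

section
/- Let n ≥ 1 and let M : Fin n → Matrix (Fin d) (Fin d) ℂ be a complete family of measurement operators, i.e. ∑ m, (M m)ᴴ * (M m) = 1. Then there exists a unitary matrix U : Matrix (Fin d × Fin n) (Fin d × Fin n) ℂ (an element of Matrix.unitaryGroup) such that for every vector ψ : Fin d → ℂ, applying U to the vector ψ ⊗ e₀ (the vector whose (i, m)-component is ψ i if m = 0 and 0 otherwise) yields the vector whose (i, m)-component is ((M m).mulVec ψ) i; that is, U (ψ ⊗ e₀) = ∑ m, (M m ψ) ⊗ e_m, the von Neumann measurement interaction between system and ancilla. -/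
open Matrix

theorem stmt_7 {d n : ℕ} (hn : 1 ≤ n)
    (M : Fin n → Matrix (Fin d) (Fin d) ℂ)
    (hM : ∑ m, (M m)ᴴ * M m = 1) :
    ∃ U ∈ Matrix.unitaryGroup (Fin d × Fin n) ℂ,
      ∀ ψ : Fin d → ℂ,
        U.mulVec (fun p : Fin d × Fin n =>
            if p.2 = (⟨0, hn⟩ : Fin n) then ψ p.1 else 0) =
          fun p : Fin d × Fin n => ((M p.2).mulVec ψ) p.1 := by
  classical
  set E := EuclideanSpace ℂ (Fin d) with hE
  set F := EuclideanSpace ℂ (Fin d × Fin n) with hF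
  -- T ψ = ∑ m, (M m ψ) ⊗ e_m as a linear map
  let Tlin : E →ₗ[ℂ] F :=
    { toFun := fun ψ => WithLp.toLp 2 (fun p : Fin d × Fin n => ((M p.2).mulVec ψ) p.1 : Fin d × Fin n → ℂ)
      map_add' := by
        intro x y
        ext p
        show (M p.2).mulVec ((x : Fin d → ℂ) + y) p.1
            = (M p.2).mulVec x p.1 + (M p.2).mulVec y p.1
        rw [Matrix.mulVec_add]; rfl
      map_smul' := by
        intro c x
        ext p
        show (M p.2).mulVec (c • (x : Fin d → ℂ)) p.1 = c * (M p.2).mulVec x p.1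
        rw [Matrix.mulVec_smul]; rfl }
  -- ι ψ = ψ ⊗ e₀ as a linear map
  let ιlin : E →ₗ[ℂ] F :=
    { toFun := fun ψ =>
        WithLp.toLp 2 (fun p : Fin d × Fin n => if p.2 = (⟨0, hn⟩ : Fin n) then ψ p.1 else 0 :
          Fin d × Fin n → ℂ)
      map_add' := by
        intro x y
        ext p
        show (if p.2 = (⟨0, hn⟩ : Fin n) then ((x : Fin d → ℂ) + y) p.1 else 0)
            = (if p.2 = (⟨0, hn⟩ : Fin n) then x p.1 else 0)
              + (if p.2 = (⟨0, hn⟩ : Fin n) then y p.1 else 0)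
        by_cases h : p.2 = (⟨0, hn⟩ : Fin n)
        · simp only [if_pos h]; rfl
        · simp [h]
      map_smul' := by
        intro c x
        ext p
        show (if p.2 = (⟨0, hn⟩ : Fin n) then (c • (x : Fin d → ℂ)) p.1 else 0)
            = c * (if p.2 = (⟨0, hn⟩ : Fin n) then x p.1 else 0)
        by_cases h : p.2 = (⟨0, hn⟩ : Fin n)
        · simp only [if_pos h]; rfl
        · simp [h] }
  have hT : ∀ x y : E, (inner ℂ (Tlin x) (Tlin y) : ℂ) = inner ℂ x y := by
    intro x y
    rw [PiLp.inner_apply, PiLp.inner_apply]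
    simp only [RCLike.inner_apply']
    have h1 : ∑ p : Fin d × Fin n, (starRingEnd ℂ) (Tlin x p) * Tlin y p
        = ∑ m : Fin n, star ((M m).mulVec x) ⬝ᵥ ((M m).mulVec y) := by
      rw [Fintype.sum_prod_type_right]
      rfl
    have h2 : ∀ m : Fin n, star ((M m).mulVec x) ⬝ᵥ ((M m).mulVec y)
        = star (x : Fin d → ℂ) ⬝ᵥ ((M m)ᴴ * M m).mulVec y := by
      intro m
      rw [Matrix.star_mulVec, Matrix.dotProduct_mulVec, Matrix.vecMul_vecMul,
        ← Matrix.dotProduct_mulVec]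
    have h3 : (∑ m, (M m)ᴴ * M m).mulVec (y : Fin d → ℂ)
        = ∑ m, ((M m)ᴴ * M m).mulVec y :=
      map_sum (Matrix.mulVec.addMonoidHomLeft (y : Fin d → ℂ)) _ _
    have h4 : ∑ m, star (x : Fin d → ℂ) ⬝ᵥ ((M m)ᴴ * M m).mulVec y
        = star (x : Fin d → ℂ) ⬝ᵥ ∑ m, ((M m)ᴴ * M m).mulVec y := by
      simp only [dotProduct, Finset.sum_apply, Finset.mul_sum]
      rw [Finset.sum_comm]
    rw [h1, Finset.sum_congr rfl fun m _ => h2 m, h4, ← h3, hM, Matrix.one_mulVec]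
    rfl
  have hι : ∀ x y : E, (inner ℂ (ιlin x) (ιlin y) : ℂ) = inner ℂ x y := by
    intro x y
    rw [PiLp.inner_apply, PiLp.inner_apply]
    simp only [RCLike.inner_apply']
    rw [Fintype.sum_prod_type_right]
    have : ∀ i : Fin d, ∀ m : Fin n,
        (starRingEnd ℂ) (ιlin x (i, m)) * ιlin y (i, m)
        = if m = (⟨0, hn⟩ : Fin n) then (starRingEnd ℂ) (x i) * y i else 0 := by
      intro i m
      show (starRingEnd ℂ) (if m = (⟨0, hn⟩ : Fin n) then x i else 0) *
          (if m = (⟨0, hn⟩ : Fin n) then y i else 0) = _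
      by_cases h : m = (⟨0, hn⟩ : Fin n) <;> simp [h]
    rw [Finset.sum_comm]
    simp_rw [this]
    simp [Finset.sum_ite_eq']
  let Tiso : E →ₗᵢ[ℂ] F := Tlin.isometryOfInner hT
  let ιiso : E →ₗᵢ[ℂ] F := ιlin.isometryOfInner hι
  let S : Submodule ℂ F := LinearMap.range ιiso.toLinearMap
  let L : S →ₗᵢ[ℂ] F := Tiso.comp ιiso.equivRange.symm.toLinearIsometry
  let J : F →ₗᵢ[ℂ] F := L.extend
  have key : ∀ ψ : E, J (ιiso ψ) = Tiso ψ := by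
    intro ψ
    have h1 : (ιiso ψ : F) = ((ιiso.equivRange ψ : S) : F) := rfl
    rw [h1, LinearIsometry.extend_apply]
    show Tiso (ιiso.equivRange.symm (ιiso.equivRange ψ)) = Tiso ψ
    rw [LinearIsometryEquiv.symm_apply_apply]
  -- the unitary matrix
  let U : Matrix (Fin d × Fin n) (Fin d × Fin n) ℂ :=
    Matrix.of fun p q => J (EuclideanSpace.single q (1 : ℂ)) p
  have evalsum : ∀ (q : Fin d × Fin n) (g : (Fin d × Fin n) → F),
      (∑ r, g r) q = ∑ r, g r q := fun q g =>
    map_sum (AddMonoidHom.mk' (fun (v : F) => v q) (fun a b => rfl)) g Finset.univ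
  have hUmul : ∀ x : F, U.mulVec (x : Fin d × Fin n → ℂ) = fun p => J x p := by
    intro x
    funext p
    have hx : x = ∑ q : Fin d × Fin n, (x q : ℂ) • EuclideanSpace.single q (1 : ℂ) := by
      apply PiLp.ext
      intro q
      rw [evalsum]
      simp [PiLp.smul_apply, EuclideanSpace.single_apply, smul_eq_mul, mul_ite,
        Finset.sum_ite_eq]
    calc U.mulVec (x : Fin d × Fin n → ℂ) p
        = ∑ q, J (EuclideanSpace.single q (1 : ℂ)) p * x q := rfl
      _ = ∑ q, x q * J (EuclideanSpace.single q (1 : ℂ)) p := by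
          exact Finset.sum_congr rfl fun q _ => mul_comm _ _
      _ = J x p := by
          conv_rhs => rw [hx, map_sum]
          rw [evalsum]
          refine Finset.sum_congr rfl fun q _ => ?_
          rw [J.map_smul]
          rfl
  refine ⟨U, ?_, ?_⟩
  · rw [Matrix.mem_unitaryGroup_iff']
    ext q r
    have : (star U * U) q r
        = ∑ p : Fin d × Fin n, (starRingEnd ℂ) (J (EuclideanSpace.single q (1 : ℂ)) p) *
            J (EuclideanSpace.single r (1 : ℂ)) p := by
      simp [Matrix.mul_apply, Matrix.conjTranspose_apply, U, star_eq_conjTranspose]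
    rw [this]
    have h2 : ∑ p : Fin d × Fin n, (starRingEnd ℂ) (J (EuclideanSpace.single q (1 : ℂ)) p) *
            J (EuclideanSpace.single r (1 : ℂ)) p
        = (inner ℂ (J (EuclideanSpace.single q (1 : ℂ))) (J (EuclideanSpace.single r (1 : ℂ))) :
            ℂ) := by
      rw [PiLp.inner_apply]; simp only [RCLike.inner_apply']
    rw [h2, J.inner_map_map, EuclideanSpace.inner_single_left]
    simp [EuclideanSpace.single_apply, Matrix.one_apply, eq_comm]
  · intro ψ
    have hinput : (fun p : Fin d × Fin n =>
        if p.2 = (⟨0, hn⟩ : Fin n) then ψ p.1 else 0) = ((ιiso (WithLp.toLp 2 ψ) : F) : Fin d × Fin n → ℂ) :=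
      rfl
    rw [hinput, hUmul (ιiso (WithLp.toLp 2 ψ))]
    funext p
    rw [key (WithLp.toLp 2 ψ)]
    rfl
end

section
/- Let n, m ≥ 1 and let D = Nat.choose (n + m - 1) (m - 1) be the number of measurement outcomes for n particles distributed among m modes. Let p : ℕ satisfy: (i) for all a b : ℕ with a * b = D, p ≤ max a b, and (ii) there exist a b : ℕ with a * b = D and max a b = p (p is the smallest among the larger members of all factorizations of D). Let k, l ≥ 1 with k * l = D, and let A : Matrix (Fin k) (Fin l) ℂ satisfy re (A * Aᴴ).trace = 1. Then the operationally useful bipartite entanglement is bounded: S(A * Aᴴ) ≤ Real.log ((D : ℝ) / p). -/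
open Matrix

/-- Trace of a Hermitian matrix is the sum of its eigenvalues. -/
lemma aux_trace_eq_sum_eigenvalues {N : ℕ} {M : Matrix (Fin N) (Fin N) ℂ}
    (hM : M.IsHermitian) : M.trace = ∑ i, (hM.eigenvalues i : ℂ) := by
  conv_lhs => rw [hM.spectral_theorem]
  rw [Unitary.conjStarAlgAut_apply, Matrix.trace_mul_comm, ← mul_assoc]
  rw [Unitary.coe_star_mul_self]
  simp [Matrix.trace_diagonal]

/-- Gibbs-type bound: the Shannon entropy of a probability vector supported on at
most `r` points is at most `log r`. -/
lemma aux_entropy_le {N : ℕ} (f : Fin N → ℝ) (h0 : ∀ i, 0 ≤ f i) (h1 : ∑ i, f i = 1)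
    {r : ℝ} (hcard : ((Finset.univ.filter (fun i => f i ≠ 0)).card : ℝ) ≤ r) :
    ∑ i, Real.negMulLog (f i) ≤ Real.log r := by
  classical
  set s : Finset (Fin N) := Finset.univ.filter (fun i => f i ≠ 0) with hs
  have hsum_s : ∑ i ∈ s, f i = 1 := by
    rw [← h1]
    apply Finset.sum_subset (Finset.filter_subset _ _)
    intro i _ hi
    by_contra h
    exact hi (Finset.mem_filter.mpr ⟨Finset.mem_univ i, h⟩)
  have ht0 : s.card ≠ 0 := by
    intro h
    rw [Finset.card_eq_zero.mp h, Finset.sum_empty] at hsum_s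
    norm_num at hsum_s
  have htpos : (0 : ℝ) < s.card := by positivity
  have ht1 : (1 : ℝ) ≤ s.card := by
    exact_mod_cast Nat.one_le_iff_ne_zero.mpr ht0
  have hstep : ∑ i, Real.negMulLog (f i) = ∑ i ∈ s, Real.negMulLog (f i) := by
    symm
    apply Finset.sum_subset (Finset.filter_subset _ _)
    intro i _ hi
    have : f i = 0 := by
      by_contra h
      exact hi (Finset.mem_filter.mpr ⟨Finset.mem_univ i, h⟩)
    simp [this]
  rw [hstep]
  -- Jensen
  have hjensen := Real.concaveOn_negMulLog.le_map_sum
    (t := s) (w := fun _ => (s.card : ℝ)⁻¹) (p := f)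
    (fun i _ => by positivity)
    (by simp [Finset.sum_const, ht0, mul_inv_cancel₀ htpos.ne'])
    (fun i _ => Set.mem_Ici.mpr (h0 i))
  have hsum_inner : ∑ i ∈ s, (s.card : ℝ)⁻¹ • f i = (s.card : ℝ)⁻¹ := by
    rw [← Finset.smul_sum, hsum_s, smul_eq_mul, mul_one]
  rw [hsum_inner] at hjensen
  have h2 : ∑ i ∈ s, Real.negMulLog (f i) ≤ (s.card : ℝ) * Real.negMulLog ((s.card : ℝ)⁻¹) := by
    have := mul_le_mul_of_nonneg_left hjensen htpos.le
    rw [Finset.mul_sum] at this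
    calc ∑ i ∈ s, Real.negMulLog (f i)
        = ∑ i ∈ s, (s.card : ℝ) * ((s.card : ℝ)⁻¹ • Real.negMulLog (f i)) := by
          apply Finset.sum_congr rfl; intro i _
          rw [smul_eq_mul, ← mul_assoc, mul_inv_cancel₀ htpos.ne', one_mul]
      _ ≤ (s.card : ℝ) * Real.negMulLog ((s.card : ℝ)⁻¹) := this
  have h3 : (s.card : ℝ) * Real.negMulLog ((s.card : ℝ)⁻¹) = Real.log (s.card : ℝ) := by
    rw [Real.negMulLog, Real.log_inv]
    field_simp
  refine h2.trans (h3 ▸ Real.log_le_log (by positivity) hcard)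

theorem stmt_11 {n m : ℕ} (hn : 1 ≤ n) (hm : 1 ≤ m)
    (D : ℕ) (hD : D = Nat.choose (n + m - 1) (m - 1))
    (p : ℕ)
    (hp₁ : ∀ a b : ℕ, a * b = D → p ≤ max a b)
    (hp₂ : ∃ a b : ℕ, a * b = D ∧ max a b = p)
    {k l : ℕ} (hk : 1 ≤ k) (hl : 1 ≤ l) (hkl : k * l = D)
    (A : Matrix (Fin k) (Fin l) ℂ)
    (hA : (A * Aᴴ).trace.re = 1) :
    entEnt A ≤ Real.log ((D : ℝ) / (p : ℝ)) := by
  classical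
  have hH := Matrix.isHermitian_mul_conjTranspose_self A
  set f : Fin k → ℝ := hH.eigenvalues with hf
  have h0 : ∀ i, 0 ≤ f i := fun i => A.eigenvalues_self_mul_conjTranspose_nonneg i
  have h1 : ∑ i, f i = 1 := by
    have htr := aux_trace_eq_sum_eigenvalues hH
    have : (A * Aᴴ).trace.re = ∑ i, f i := by
      rw [htr, Complex.re_sum]
      simp
      rfl
    linarith [hA]
  -- positivity of D and p
  have hDpos : 0 < D := hkl ▸ Nat.mul_pos hk hl
  have hppos : 0 < p := by
    obtain ⟨a, b, hab, habp⟩ := hp₂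
    rcases Nat.eq_zero_or_pos p with h | h
    · exfalso
      rw [h] at habp
      have ha : a = 0 := Nat.le_zero.mp (habp ▸ le_max_left a b)
      rw [ha, zero_mul] at hab
      omega
    · exact h
  -- rank bound : number of nonzero eigenvalues ≤ min k l
  have hrank : (Finset.univ.filter (fun i => f i ≠ 0)).card ≤ min k l := by
    have h₁ : (Finset.univ.filter (fun i => f i ≠ 0)).card
        = Fintype.card {i // f i ≠ 0} := (Fintype.card_subtype _).symm
    have h₂ : Fintype.card {i // f i ≠ 0} = (A * Aᴴ).rank :=
      (hH.rank_eq_card_non_zero_eigs).symm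
    have h₃ : (A * Aᴴ).rank = A.rank := by
      open ComplexOrder in exact A.rank_self_mul_conjTranspose
    have h₄ : A.rank ≤ k := by
      simpa using A.rank_le_card_height
    have h₅ : A.rank ≤ l := by
      simpa using A.rank_le_card_width
    rw [h₁, h₂, h₃]
    exact le_min h₄ h₅
  -- min k l ≤ D / p in ℝ
  have hpmax : p ≤ max k l := hp₁ k l hkl
  have hminmax : min k l * max k l = D := by
    rw [← hkl]; rcases le_total k l with h | h <;> simp [min_eq_left, max_eq_right, h, min_eq_right, max_eq_left, mul_comm]
  have hmin_le : (min k l : ℝ) ≤ (D : ℝ) / (p : ℝ) := by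
    rw [le_div_iff₀ (by exact_mod_cast hppos)]
    have : min k l * p ≤ D := by
      calc min k l * p ≤ min k l * max k l := Nat.mul_le_mul_left _ hpmax
        _ = D := hminmax
    exact_mod_cast this
  have hcard : ((Finset.univ.filter (fun i => f i ≠ 0)).card : ℝ) ≤ (D : ℝ) / (p : ℝ) := by
    refine le_trans ?_ hmin_le
    exact_mod_cast hrank
  exact aux_entropy_le f h0 h1 hcard
end
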